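/- Let C be an exact inverse category and f : A → B a morphism of C. Then P′(f) = P(f*) (as functions P(B) → P(A)) if and only if f is a monomorphism, and P(f) = P′(f*) (as functions P(A) → P(B)) if and only if f is an epimorphism. -/

import Mathlib

open CategoryTheory CategoryTheory.Limits

universe v u

/-- An operation assigning to each morphism a morphism in the opposite direction. -/
def MorphismOp (C : Type u) [Category.{v} C] : Type (max u v) :=
  ∀ {A B : C}, (A ⟶ B) → (B ⟶ A)

variable {C : Type u} [Category.{v} C]

/-- `s` is an involution: a contravariant endofunctor which is the identity on objects
and involutive on morphisms. -/
def IsInvolution (s : MorphismOp C) : Prop :=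
  (∀ {A B D : C} (f : A ⟶ B) (g : B ⟶ D), s (f ≫ g) = s g ≫ s f) ∧
  (∀ A : C, s (𝟙 A) = 𝟙 A) ∧
  (∀ {A B : C} (f : A ⟶ B), s (s f) = f)

/-- A projection on `A` is an idempotent endomorphism fixed by the involution `s`. -/
def IsProjection (s : MorphismOp C) {A : C} (i : A ⟶ A) : Prop :=
  i ≫ i = i ∧ s i = i

/-- `g` is a Moore–Penrose generalized inverse of `f` with respect to `s`:
`f g f = f`, `g f g = g`, `(f g)* = f g`, `(g f)* = g f`. -/
def IsMoorePenrose (s : MorphismOp C) {A B : C} (f : A ⟶ B) (g : B ⟶ A) : Prop :=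
  f ≫ g ≫ f = f ∧ g ≫ f ≫ g = g ∧ s (f ≫ g) = f ≫ g ∧ s (g ≫ f) = g ≫ f

/-- `inv` makes `C` an inverse category: each morphism `f` has `inv f` as its unique
generalized inverse (`f ∘ (inv f) ∘ f = f` and `(inv f) ∘ f ∘ (inv f) = inv f`). -/
def IsInverseOp (inv : MorphismOp C) : Prop :=
  ∀ {A B : C} (f : A ⟶ B),
    (f ≫ inv f ≫ f = f ∧ inv f ≫ f ≫ inv f = inv f) ∧
    ∀ g : B ⟶ A, f ≫ g ≫ f = f → g ≫ f ≫ g = g → g = inv f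

/-- `u` is a kernel of `f`. -/
def IsKernelOf [HasZeroMorphisms C] {K A B : C} (u : K ⟶ A) (f : A ⟶ B) : Prop :=
  u ≫ f = 0 ∧ ∀ {X : C} (g : X ⟶ A), g ≫ f = 0 → ∃! h : X ⟶ K, h ≫ u = g

/-- `v` is a cokernel of `f`. -/
def IsCokernelOf [HasZeroMorphisms C] {A B Q : C} (v : B ⟶ Q) (f : A ⟶ B) : Prop :=
  f ≫ v = 0 ∧ ∀ {X : C} (g : B ⟶ X), f ≫ g = 0 → ∃! h : Q ⟶ X, v ≫ h = g

/-- An exact category (in the sense of the paper): a category with a zero object,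
kernels and cokernels, in which every monomorphism is a kernel, every epimorphism is a
cokernel, and every morphism factors as a monomorphism composed with an epimorphism. -/
structure IsExactCategory (C : Type u) [Category.{v} C] [HasZeroObject C]
    [HasZeroMorphisms C] : Prop where
  hasKernels : ∀ {A B : C} (f : A ⟶ B), ∃ (K : C) (u : K ⟶ A), IsKernelOf u f
  hasCokernels : ∀ {A B : C} (f : A ⟶ B), ∃ (Q : C) (v : B ⟶ Q), IsCokernelOf v f
  normal : ∀ {X A : C} (u : X ⟶ A), Mono u → ∃ (B : C) (f : A ⟶ B), IsKernelOf u f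
  conormal : ∀ {A B : C} (v : A ⟶ B), Epi v → ∃ (X : C) (f : X ⟶ A), IsCokernelOf v f
  monoEpiFact : ∀ {A B : C} (f : A ⟶ B),
    ∃ (I : C) (q : A ⟶ I) (p : I ⟶ B), Epi q ∧ Mono p ∧ q ≫ p = f

/-- A Baer*-structure on `C` with respect to `s`: each morphism `f` has a projection
`f′ = prj f` on its domain with `f ∘ g = 0` iff `g` factors through `f′`. -/
structure BaerStar (C : Type u) [Category.{v} C] [HasZeroObject C] [HasZeroMorphisms C]
    (s : MorphismOp C) where
  prj : ∀ {A B : C}, (A ⟶ B) → (A ⟶ A)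
  prj_isProjection : ∀ {A B : C} (f : A ⟶ B), IsProjection s (prj f)
  prj_spec : ∀ {A B X : C} (f : A ⟶ B) (g : X ⟶ A),
    g ≫ f = 0 ↔ ∃ h : X ⟶ A, g = h ≫ prj f

/-- The natural partial order on projections: `e ≤ f` iff `e = e ∘ f`. -/
def ProjLe {A : C} (e f : A ⟶ A) : Prop := f ≫ e = e

/-- `p` is the image of `g`: the smallest subobject of the codomain of `g` through
which `g` factors. -/
def IsImageOf {A B I : C} (p : I ⟶ B) (g : A ⟶ B) : Prop :=
  Mono p ∧ (∃ t : A ⟶ I, t ≫ p = g) ∧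
  ∀ {S : C} (t : A ⟶ S) (m : S ⟶ B), Mono m → t ≫ m = g → ∃ w : I ⟶ S, w ≫ m = p

/-!
In an inverse category `f` is monic iff `f* ∘ f = 1` and epic iff `f ∘ f* = 1`; since `f** = f`,
replacing `f` by `f*` exchanges the two halves of the statement. At `j = 1` the identity
`(j′ ∘ f)′ = f* ∘ j ∘ f` reads `0′ = f* ∘ f`, i.e. `f* ∘ f = 1`. Conversely, if `f* ∘ f = 1` then
`f* ∘ j ∘ f` fixes exactly the morphisms killed by `j′ ∘ f`, which characterises `(j′ ∘ f)′`;
this needs `j′ ∘ y = 0 ⇒ j ∘ y = y`, i.e. `j″ = j`. That is where exactness enters: write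
`j = p ∘ q` with `q` epic and `p` monic, so that idempotence forces `q ∘ p = 1`; as `q` is a
cokernel of some `g`, and `j ∘ g = 0` makes `g` factor through `j′`, every `y` with `y ∘ j′ = 0`
factors through `q`, whence `y ∘ j = y`. Applying `*` gives the version on the other side.
-/

theorem IsProjection.inv_eq {inv : MorphismOp C} {A : C} {i : A ⟶ A}
    (hi : IsProjection inv i) : inv i = i :=
  hi.2

namespace IsInverseOp

variable {inv : MorphismOp C}

theorem eq_inv (hinv : IsInverseOp inv) {A B : C} {f : A ⟶ B} {g : B ⟶ A}
    (h₁ : f ≫ g ≫ f = f) (h₂ : g ≫ f ≫ g = g) : g = inv f :=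
  (hinv f).2 g h₁ h₂

theorem comp_inv_comp (hinv : IsInverseOp inv) {A B : C} (f : A ⟶ B) :
    f ≫ inv f ≫ f = f :=
  (hinv f).1.1

theorem inv_comp_inv (hinv : IsInverseOp inv) {A B : C} (f : A ⟶ B) :
    inv f ≫ f ≫ inv f = inv f :=
  (hinv f).1.2

theorem inv_inv (hinv : IsInverseOp inv) {A B : C} (f : A ⟶ B) : inv (inv f) = f :=
  (hinv.eq_inv (hinv.inv_comp_inv f) (hinv.comp_inv_comp f)).symm

theorem inv_eq_self_of_idem (hinv : IsInverseOp inv) {A : C} {e : A ⟶ A} (he : e ≫ e = e) :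
    inv e = e :=
  (hinv.eq_inv (by rw [he, he]) (by rw [he, he])).symm

theorem inv_id (hinv : IsInverseOp inv) (A : C) : inv (𝟙 A) = 𝟙 A :=
  hinv.inv_eq_self_of_idem (Category.id_comp _)

theorem inv_zero [HasZeroMorphisms C] (hinv : IsInverseOp inv) (A B : C) :
    inv (0 : A ⟶ B) = 0 :=
  (hinv.eq_inv (by simp) (by simp)).symm

theorem comp_inv_idem (hinv : IsInverseOp inv) {A B : C} (f : A ⟶ B) :
    (f ≫ inv f) ≫ f ≫ inv f = f ≫ inv f := by
  rw [Category.assoc, reassoc_of% (hinv.comp_inv_comp f)]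

theorem inv_comp_idem (hinv : IsInverseOp inv) {A B : C} (f : A ⟶ B) :
    (inv f ≫ f) ≫ inv f ≫ f = inv f ≫ f := by
  rw [Category.assoc, reassoc_of% (hinv.inv_comp_inv f)]

/-- `b ≫ inv (a ≫ b) ≫ a` is again a generalized inverse of `a ≫ b`, hence equals
`inv (a ≫ b)`, which is therefore idempotent. -/
theorem comp_idem_of_idem (hinv : IsInverseOp inv) {A : C} {a b : A ⟶ A}
    (ha : a ≫ a = a) (hb : b ≫ b = b) : (a ≫ b) ≫ a ≫ b = a ≫ b := by
  set c := inv (a ≫ b)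
  have hc₁ : a ≫ b ≫ c ≫ a ≫ b = a ≫ b := by
    simpa only [Category.assoc] using hinv.comp_inv_comp (a ≫ b)
  have hc₂ : c ≫ a ≫ b ≫ c = c := by
    simpa only [Category.assoc] using hinv.inv_comp_inv (a ≫ b)
  have hbca : b ≫ c ≫ a = c := by
    apply hinv.eq_inv <;> simp only [Category.assoc, reassoc_of% ha, reassoc_of% hb]
    · exact hc₁
    · rw [reassoc_of% hc₂]
  have hcc : c ≫ c = c := by
    conv_lhs => rw [← hbca]
    simp only [Category.assoc]
    rw [reassoc_of% hc₂, hbca]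
  have hab : a ≫ b = c := (hinv.inv_inv (a ≫ b)).symm.trans (hinv.inv_eq_self_of_idem hcc)
  rw [hab, hcc]

theorem idem_comm (hinv : IsInverseOp inv) {A : C} {a b : A ⟶ A}
    (ha : a ≫ a = a) (hb : b ≫ b = b) : a ≫ b = b ≫ a := by
  have hba : b ≫ a = inv (a ≫ b) := by
    apply hinv.eq_inv <;> simp only [Category.assoc, reassoc_of% ha, reassoc_of% hb]
    · simpa only [Category.assoc] using hinv.comp_idem_of_idem ha hb
    · simpa only [Category.assoc] using hinv.comp_idem_of_idem hb ha
  rw [hba, hinv.inv_eq_self_of_idem (hinv.comp_idem_of_idem ha hb)]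

theorem inv_comp (hinv : IsInverseOp inv) {A B D : C} (f : A ⟶ B) (g : B ⟶ D) :
    inv (f ≫ g) = inv g ≫ inv f := by
  have hcomm := hinv.idem_comm (hinv.comp_inv_idem g) (hinv.inv_comp_idem f)
  symm
  apply hinv.eq_inv
  · calc (f ≫ g) ≫ (inv g ≫ inv f) ≫ f ≫ g
        = f ≫ ((g ≫ inv g) ≫ inv f ≫ f) ≫ g := by simp only [Category.assoc]
      _ = (f ≫ inv f ≫ f) ≫ g ≫ inv g ≫ g := by
          rw [hcomm]; simp only [Category.assoc]
      _ = f ≫ g := by rw [hinv.comp_inv_comp, hinv.comp_inv_comp]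
  · calc (inv g ≫ inv f) ≫ (f ≫ g) ≫ inv g ≫ inv f
        = inv g ≫ ((inv f ≫ f) ≫ g ≫ inv g) ≫ inv f := by simp only [Category.assoc]
      _ = (inv g ≫ g ≫ inv g) ≫ inv f ≫ f ≫ inv f := by
          rw [← hcomm]; simp only [Category.assoc]
      _ = inv g ≫ inv f := by rw [hinv.inv_comp_inv, hinv.inv_comp_inv]

theorem isProjection_conj (hinv : IsInverseOp inv) {A B : C} (f : A ⟶ B) {j : B ⟶ B}
    (hj : IsProjection inv j) : IsProjection inv (f ≫ j ≫ inv f) := by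
  constructor
  · calc (f ≫ j ≫ inv f) ≫ f ≫ j ≫ inv f
        = f ≫ (j ≫ inv f ≫ f) ≫ j ≫ inv f := by simp only [Category.assoc]
      _ = (f ≫ inv f ≫ f) ≫ (j ≫ j) ≫ inv f := by
          rw [hinv.idem_comm hj.1 (hinv.inv_comp_idem f)]; simp only [Category.assoc]
      _ = f ≫ j ≫ inv f := by rw [hinv.comp_inv_comp, hj.1]
  · show inv (f ≫ j ≫ inv f) = f ≫ j ≫ inv f
    rw [hinv.inv_comp, hinv.inv_comp, hinv.inv_inv, hj.inv_eq, Category.assoc]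

theorem mono_iff (hinv : IsInverseOp inv) {A B : C} (f : A ⟶ B) :
    Mono f ↔ f ≫ inv f = 𝟙 A :=
  ⟨fun _ => (cancel_mono f).1 (by rw [Category.assoc, hinv.comp_inv_comp, Category.id_comp]),
    fun h => (SplitMono.mk (inv f) h).mono⟩

theorem epi_iff (hinv : IsInverseOp inv) {A B : C} (f : A ⟶ B) :
    Epi f ↔ inv f ≫ f = 𝟙 B :=
  ⟨fun _ => (cancel_epi f).1 (by rw [hinv.comp_inv_comp, Category.comp_id]),
    fun h => (SplitEpi.mk (inv f) h).epi⟩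

end IsInverseOp

namespace BaerStar

variable [HasZeroObject C] [HasZeroMorphisms C] {inv : MorphismOp C} (Bs : BaerStar C inv)

theorem inv_prj {A B : C} (F : A ⟶ B) : inv (Bs.prj F) = Bs.prj F :=
  (Bs.prj_isProjection F).inv_eq

theorem prj_comp {A B : C} (F : A ⟶ B) : Bs.prj F ≫ F = 0 :=
  (Bs.prj_spec F _).2 ⟨𝟙 _, (Category.id_comp _).symm⟩

theorem comp_eq_zero_iff {A B X : C} (F : A ⟶ B) (x : X ⟶ A) :
    x ≫ F = 0 ↔ x ≫ Bs.prj F = x := by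
  refine ⟨fun hx => ?_, fun hx => by rw [← hx, Category.assoc, prj_comp, comp_zero]⟩
  obtain ⟨h, rfl⟩ := (Bs.prj_spec F x).1 hx
  rw [Category.assoc, (Bs.prj_isProjection F).1]

theorem prj_eq_of_comp_eq_zero_iff (hinv : IsInverseOp inv) {A B : C} (F : A ⟶ B) {e : A ⟶ A}
    (he : IsProjection inv e) (hF : ∀ {X : C} (x : X ⟶ A), x ≫ F = 0 ↔ x ≫ e = x) :
    Bs.prj F = e := by
  have hprj_e : Bs.prj F ≫ e = Bs.prj F := (hF _).1 (Bs.prj_comp F)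
  have he_prj : e ≫ Bs.prj F = e := (Bs.comp_eq_zero_iff F e).1 ((hF e).2 he.1)
  calc Bs.prj F = Bs.prj F ≫ e := hprj_e.symm
    _ = inv (e ≫ Bs.prj F) := by rw [hinv.inv_comp, he.inv_eq, Bs.inv_prj F]
    _ = e := by rw [he_prj, he.inv_eq]

theorem prj_id (B : C) : Bs.prj (𝟙 B) = 0 := by
  simpa using Bs.prj_comp (𝟙 B)

theorem prj_zero (A B : C) : Bs.prj (0 : A ⟶ B) = 𝟙 A := by
  simpa using (Bs.comp_eq_zero_iff (0 : A ⟶ B) (𝟙 A)).1 comp_zero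

theorem comp_prj_self (hinv : IsInverseOp inv) {B : C} {j : B ⟶ B}
    (hj : IsProjection inv j) : j ≫ Bs.prj j = 0 :=
  calc j ≫ Bs.prj j = inv (Bs.prj j ≫ j) := by rw [hinv.inv_comp, Bs.inv_prj, hj.inv_eq]
    _ = 0 := by rw [prj_comp, hinv.inv_zero]

end BaerStar

theorem comp_eq_id_of_idem_of_epi_of_mono {I B : C} {q : B ⟶ I} {p : I ⟶ B} [Epi q] [Mono p]
    (h : (q ≫ p) ≫ q ≫ p = q ≫ p) : p ≫ q = 𝟙 I :=
  (cancel_mono p).1 <| (cancel_epi q).1 <| by simpa only [Category.assoc, Category.id_comp] using h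

namespace IsExactCategory

variable [HasZeroObject C] [HasZeroMorphisms C] {inv : MorphismOp C}

theorem comp_eq_self_of_prj_comp_eq_zero (hC : IsExactCategory C) (Bs : BaerStar C inv)
    {B Y : C} {j : B ⟶ B} (hj : j ≫ j = j) {y : B ⟶ Y} (hy : Bs.prj j ≫ y = 0) :
    j ≫ y = y := by
  obtain ⟨I, q, p, hq, hp, rfl⟩ := hC.monoEpiFact j
  have hpq : p ≫ q = 𝟙 I := comp_eq_id_of_idem_of_epi_of_mono hj
  obtain ⟨X, g, hg_zero, hg_univ⟩ := hC.conormal q hq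
  obtain ⟨h, hgh⟩ := (Bs.prj_spec (q ≫ p) g).1 (by rw [reassoc_of% hg_zero, zero_comp])
  obtain ⟨k, rfl, -⟩ := hg_univ y (by rw [hgh, Category.assoc, hy, comp_zero])
  rw [Category.assoc, reassoc_of% hpq]

theorem comp_eq_self_of_comp_prj_eq_zero (hinv : IsInverseOp inv) (hC : IsExactCategory C)
    (Bs : BaerStar C inv) {B X : C} {j : B ⟶ B} (hj : IsProjection inv j) {x : X ⟶ B}
    (hx : x ≫ Bs.prj j = 0) : x ≫ j = x := by
  have hinvx : Bs.prj j ≫ inv x = 0 := by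
    rw [← Bs.inv_prj j, ← hinv.inv_comp, hx, hinv.inv_zero]
  have h := hC.comp_eq_self_of_prj_comp_eq_zero Bs hj.1 hinvx
  rw [← hinv.inv_inv (x ≫ j), hinv.inv_comp, hj.inv_eq, h, hinv.inv_inv]

theorem prj_comp_prj_of_comp_inv_eq_id (hinv : IsInverseOp inv) (hC : IsExactCategory C)
    (Bs : BaerStar C inv) {A B : C} {f : A ⟶ B} (hf : f ≫ inv f = 𝟙 A) {j : B ⟶ B}
    (hj : IsProjection inv j) : Bs.prj (f ≫ Bs.prj j) = f ≫ j ≫ inv f := by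
  refine Bs.prj_eq_of_comp_eq_zero_iff hinv _ (hinv.isProjection_conj f hj)
    fun x => ⟨fun hx => ?_, fun hx => ?_⟩
  · have hxf : (x ≫ f) ≫ j = x ≫ f :=
      hC.comp_eq_self_of_comp_prj_eq_zero hinv Bs hj (by rw [Category.assoc, hx])
    rw [reassoc_of% hxf, hf, Category.comp_id]
  · have hxf : x ≫ f = x ≫ f ≫ j :=
      calc x ≫ f = x ≫ f ≫ j ≫ inv f ≫ f := by rw [reassoc_of% hx]
        _ = x ≫ (f ≫ inv f ≫ f) ≫ j := by
            rw [hinv.idem_comm hj.1 (hinv.inv_comp_idem f)]; simp only [Category.assoc]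
        _ = x ≫ f ≫ j := by rw [hinv.comp_inv_comp]
    rw [← Category.assoc, hxf, Category.assoc, Category.assoc, Bs.comp_prj_self hinv hj,
      comp_zero, comp_zero]

theorem forall_prj_comp_prj_iff (hinv : IsInverseOp inv) (hC : IsExactCategory C)
    (Bs : BaerStar C inv) {A B : C} (f : A ⟶ B) :
    (∀ j : B ⟶ B, IsProjection inv j →
        Bs.prj (f ≫ Bs.prj j) = inv (inv f) ≫ j ≫ inv f) ↔ f ≫ inv f = 𝟙 A := by
  simp only [hinv.inv_inv]
  refine ⟨fun H => ?_, fun hf j hj => hC.prj_comp_prj_of_comp_inv_eq_id hinv Bs hf hj⟩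
  simpa [Bs.prj_id, Bs.prj_zero] using (H (𝟙 B) ⟨Category.id_comp _, hinv.inv_id B⟩).symm

end IsExactCategory

/-- In an exact inverse category, `P′(f) = P(f*)` iff `f` is a
monomorphism, and `P(f) = P′(f*)` iff `f` is an epimorphism. -/
theorem stmt16 [HasZeroObject C] [HasZeroMorphisms C] (inv : MorphismOp C)
    (hinv : IsInverseOp inv) (hC : IsExactCategory C) (Bs : BaerStar C inv)
    {A B : C} (f : A ⟶ B) :
    ((∀ j : B ⟶ B, IsProjection inv j →
        Bs.prj (f ≫ Bs.prj j) = inv (inv f) ≫ j ≫ inv f) ↔ Mono f) ∧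
    ((∀ i : A ⟶ A, IsProjection inv i →
        inv f ≫ i ≫ f = Bs.prj (inv f ≫ Bs.prj i)) ↔ Epi f) := by
  refine ⟨(hC.forall_prj_comp_prj_iff hinv Bs f).trans (hinv.mono_iff f).symm, ?_⟩
  have h := hC.forall_prj_comp_prj_iff hinv Bs (inv f)
  simp only [hinv.inv_inv] at h
  rw [hinv.epi_iff, ← h]
  exact forall₂_congr fun _ _ => eq_comm
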